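/- arXiv:1210.5607 — 5 statements merged into one kernel-verified Lean document; each statement's English description precedes it below -/
import Mathlib

section
/- Let c be a nonrepetitive coloring of G[E_k], where G is any graph and k ≥ 1. If v ∈ V(G) is a vertex of degree d in G and two distinct vertices in the layer v[E_k] receive the same color under c, then c uses at least dk+1 colors. -/
/-- The lexicographic product `G[H]` of two simple graphs. -/
def lexProd {V W : Type*} (G : SimpleGraph V) (H : SimpleGraph W) : SimpleGraph (V × W) where
  Adj x y := G.Adj x.1 y.1 ∨ (x.1 = y.1 ∧ H.Adj x.2 y.2)
  symm := by
    constructor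
    rintro ⟨a, b⟩ ⟨a', b'⟩ (h | ⟨h1, h2⟩)
    · exact Or.inl h.symm
    · exact Or.inr ⟨h1.symm, h2.symm⟩
  loopless := by
    constructor
    rintro ⟨a, b⟩ (h | ⟨_, h2⟩)
    · exact G.irrefl h
    · exact H.irrefl h2

/-- A coloring `c` of a graph `G` is nonrepetitive if there is no path
`v₁ v₂ … v_{2l}` (pairwise distinct vertices, consecutive ones adjacent) with
`c vᵢ = c v_{l+i}` for all `1 ≤ i ≤ l`. -/
def IsNonrepetitive {V α : Type*} (G : SimpleGraph V) (c : V → α) : Prop :=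
  ∀ l : ℕ, 0 < l → ∀ f : ℕ → V,
    (∀ i j, i < 2 * l → j < 2 * l → f i = f j → i = j) →
    (∀ i, i + 1 < 2 * l → G.Adj (f i) (f (i + 1))) →
    ¬ (∀ i, i < l → c (f i) = c (f (i + l)))

/-- The Thue chromatic number: least number of colors in a nonrepetitive coloring. -/
noncomputable def thueNumber {V : Type*} (G : SimpleGraph V) : ℕ :=
  sInf {n : ℕ | ∃ c : V → Fin n, IsNonrepetitive G c}

/-- The rainbow Thue chromatic number of `G[H]`: least number of colors in a
nonrepetitive coloring of `G[H]` in which every layer is rainbow colored. -/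
noncomputable def rainbowThueNumber {V W : Type*} (G : SimpleGraph V) (H : SimpleGraph W) : ℕ :=
  sInf {n : ℕ | ∃ c : V × W → Fin n, IsNonrepetitive (lexProd G H) c ∧
    ∀ v : V, Function.Injective fun w : W => c (v, w)}

/-! A nonrepetitive coloring is proper (paths on two vertices), so no vertex `(w, a)` with
`w ∈ N(v)` has the color of `(v, u₁)`. And two vertices `(w, a) ≠ (w', b)` with `w, w' ∈ N(v)`
cannot share a color either, since then `(v, u₁) (w, a) (v, u₂) (w', b)` would be a path colored
by a square. So the `d * k` vertices of `N(v) × E_k` and `(v, u₁)` use `d * k + 1` distinct colors.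
-/

namespace IsNonrepetitive

variable {V α : Type*} {G : SimpleGraph V} {c : V → α}

theorem map_take_ne_map_drop (hc : IsNonrepetitive G c) {p : List V} {l : ℕ} (hl : 0 < l)
    (hp : p.length = 2 * l) (hnd : p.Nodup) (hchain : p.IsChain G.Adj) :
    (p.take l).map c ≠ (p.drop l).map c := by
  intro heq
  obtain ⟨x, -⟩ := List.exists_mem_of_length_pos (by omega : 0 < p.length)
  refine hc l hl (fun i => p.getD i x) (fun i j hi hj hij => ?_) (fun i hi => ?_) (fun i hi => ?_)
  · rw [List.getD_eq_getElem _ _ (by omega), List.getD_eq_getElem _ _ (by omega)] at hij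
    exact hnd.getElem_inj_iff.1 hij
  · rw [List.getD_eq_getElem _ _ (by omega), List.getD_eq_getElem _ _ (by omega)]
    exact hchain.getElem i (by omega)
  · have := congrArg (·[i]?) heq
    simp only [List.getElem?_map, List.getElem?_take, List.getElem?_drop, if_pos hi] at this
    rw [List.getD_eq_getElem _ _ (by omega), List.getD_eq_getElem _ _ (by omega)]
    simpa [List.getElem?_eq_getElem (show i < p.length by omega),
      List.getElem?_eq_getElem (show l + i < p.length by omega), add_comm] using this

theorem ne_of_adj (hc : IsNonrepetitive G c) {x y : V} (h : G.Adj x y) : c x ≠ c y := by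
  have : [c x] ≠ [c y] :=
    hc.map_take_ne_map_drop (p := [x, y]) one_pos rfl (by simpa using h.ne) (by simpa using h)
  simpa using this

theorem not_square {x y z w : V} (hc : IsNonrepetitive G c) (hxy : G.Adj x y) (hyz : G.Adj y z)
    (hzw : G.Adj z w) (hxz : x ≠ z) (hxw : x ≠ w) (hyw : y ≠ w) (hcxz : c x = c z) :
    c y ≠ c w := by
  have : [c x, c y] ≠ [c z, c w] := hc.map_take_ne_map_drop (p := [x, y, z, w]) two_pos rfl
    (by simp [hxy.ne, hyz.ne, hzw.ne, hxz, hxw, hyw]) (by simp [hxy, hyz, hzw])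
  simpa [hcxz] using this

end IsNonrepetitive

theorem lexProd_adj_of_adj {V W : Type*} {G : SimpleGraph V} (H : SimpleGraph W) {v w : V}
    (h : G.Adj v w) (a b : W) : (lexProd G H).Adj (v, a) (w, b) :=
  Or.inl h

theorem IsNonrepetitive.injOn_neighborSet_prod_of_apply_eq {V W α : Type*} {G : SimpleGraph V}
    {H : SimpleGraph W} {c : V × W → α} (hc : IsNonrepetitive (lexProd G H) c) {v : V}
    {u₁ u₂ : W} (hne : u₁ ≠ u₂) (hcol : c (v, u₁) = c (v, u₂)) :
    Set.InjOn c (G.neighborSet v ×ˢ Set.univ) := by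
  rintro ⟨w, a⟩ ⟨hw, -⟩ ⟨w', b⟩ ⟨hw', -⟩ hcw
  by_contra hne'
  exact hc.not_square (lexProd_adj_of_adj H hw u₁ a) (lexProd_adj_of_adj H hw.symm a u₂)
    (lexProd_adj_of_adj H hw' u₂ b) (fun h => hne (congrArg Prod.snd h))
    (fun h => hw'.ne (congrArg Prod.fst h)) hne' hcol hcw

theorem stmt_4_general {V α : Type*} (G : SimpleGraph V) (k : ℕ)
    (c : V × Fin k → α)
    (hnr : IsNonrepetitive (lexProd G (⊥ : SimpleGraph (Fin k))) c)
    (v : V) (d : ℕ) (hfin : (G.neighborSet v).Finite) (hdeg : (G.neighborSet v).ncard = d)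
    (u₁ u₂ : Fin k) (hne : u₁ ≠ u₂) (hcol : c (v, u₁) = c (v, u₂)) :
    ∃ S : Finset α, ↑S ⊆ Set.range c ∧ d * k + 1 ≤ S.card := by
  classical
  set T : Finset (V × Fin k) := hfin.toFinset ×ˢ Finset.univ
  have hinj : Set.InjOn c T := by
    simpa [T] using hnr.injOn_neighborSet_prod_of_apply_eq hne hcol
  have hnew : c (v, u₁) ∉ T.image c := by
    simp only [Finset.mem_image, not_exists, not_and]
    rintro ⟨w, a⟩ hw
    have hvw : G.Adj v w := by simpa [T] using hw
    exact hnr.ne_of_adj (lexProd_adj_of_adj _ hvw.symm a u₁)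
  refine ⟨insert (c (v, u₁)) (T.image c), ?_, ?_⟩
  · rw [Finset.coe_insert, Finset.coe_image, Set.insert_subset_iff]
    exact ⟨⟨_, rfl⟩, Set.image_subset_range _ _⟩
  · rw [Finset.card_insert_of_notMem hnew, Finset.card_image_of_injOn hinj, Finset.card_product,
      Finset.card_univ, Fintype.card_fin, ← Set.ncard_eq_toFinset_card _ hfin, hdeg]

/-- If `c` is a nonrepetitive coloring of `G[E_k]`, `v` has degree `d` in `G`, and two
distinct vertices of the layer `v[E_k]` receive the same color, then `c` uses at least
`d*k + 1` colors. -/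
theorem stmt_4 {V α : Type*} (G : SimpleGraph V) (k : ℕ) (hk : 1 ≤ k)
    (c : V × Fin k → α)
    (hnr : IsNonrepetitive (lexProd G (⊥ : SimpleGraph (Fin k))) c)
    (v : V) (d : ℕ) (hfin : (G.neighborSet v).Finite) (hdeg : (G.neighborSet v).ncard = d)
    (u₁ u₂ : Fin k) (hne : u₁ ≠ u₂) (hcol : c (v, u₁) = c (v, u₂)) :
    ∃ S : Finset α, ↑S ⊆ Set.range c ∧ d * k + 1 ≤ S.card :=
  stmt_4_general G k c hnr v d hfin hdeg u₁ u₂ hne hcol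
end

section
/- Let S be a finite sequence over a 3-letter alphabet that avoids repetitions of length at most 6. Then every gap between two consecutive peaks of S is at most 3, and every such gap is at least 1 except possibly the first gap (between the first position and the next peak) and the last gap (between the last peak before the final position and the final position), which can be 0. -/
/-- A sequence `s` of length `n` avoids repetitions of length at most 6 if no block of
`2l` consecutive entries with `1 ≤ l ≤ 3` forms a repetition. -/
def AvoidsShortReps (n : ℕ) (s : ℕ → Fin 3) : Prop :=
  ∀ start l : ℕ, 1 ≤ l → l ≤ 3 → start + 2 * l ≤ n →
    ¬ (∀ i, i < l → s (start + i) = s (start + l + i))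

/-- A position `p` of a sequence of length `n` is a peak if it is the first or the last
position, or its two neighboring entries are equal. -/
def IsPeak (n : ℕ) (s : ℕ → Fin 3) (p : ℕ) : Prop :=
  p < n ∧ (p = 0 ∨ p = n - 1 ∨ s (p - 1) = s (p + 1))

/-- `p` and `q` are consecutive peaks (with `p < q` and no peak strictly in between);
the gap between them is `q - p - 1`. -/
def ConsecutivePeaks (n : ℕ) (s : ℕ → Fin 3) (p q : ℕ) : Prop :=
  IsPeak n s p ∧ IsPeak n s q ∧ p < q ∧ ∀ r, p < r → r < q → ¬ IsPeak n s r

/-!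
Consecutive entries always differ (repetitions of length 2 are forbidden), and at a non-peak the
entries on both sides of it differ. If four consecutive positions are non-peaks, six consecutive
entries are pairwise distinct at distance 1 and 2; over three letters this forces them to be
periodic with period 3, i.e. a repetition of length 6. A gap 0 between two peaks that are not the
endpoints gives `s (p - 1) = s (p + 1)` and `s p = s (p + 2)`, a repetition of length 4.
-/

lemma fin_three_eq_of_ne {x y z w : Fin 3} (hxy : x ≠ y) (hxz : x ≠ z) (hyz : y ≠ z)
    (hyw : y ≠ w) (hzw : z ≠ w) : w = x := by omega

section

variable {n : ℕ} {s : ℕ → Fin 3} {k : ℕ}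

namespace AvoidsShortReps

lemma ne_succ (h : AvoidsShortReps n s) (hk : k + 2 ≤ n) : s k ≠ s (k + 1) := fun heq =>
  h k 1 le_rfl (by norm_num) hk fun i hi => by interval_cases i; exact heq

lemma not_square_two (h : AvoidsShortReps n s) (hk : k + 4 ≤ n) (h0 : s k = s (k + 2)) :
    s (k + 1) ≠ s (k + 3) := fun h1 =>
  h k 2 (by norm_num) (by norm_num) hk fun i hi => by
    interval_cases i
    · exact h0
    · exact h1

lemma not_square_three (h : AvoidsShortReps n s) (hk : k + 6 ≤ n) (h0 : s k = s (k + 3))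
    (h1 : s (k + 1) = s (k + 4)) : s (k + 2) ≠ s (k + 5) := fun h2 =>
  h k 3 (by norm_num) le_rfl hk fun i hi => by
    interval_cases i
    · exact h0
    · exact h1
    · exact h2

end AvoidsShortReps

lemma IsPeak.eq_of_ne (hp : IsPeak n s (k + 1)) (hn : k + 1 ≠ n - 1) : s k = s (k + 2) := by
  rcases hp.2 with h0 | hlast | heq
  · omega
  · exact absurd hlast hn
  · exact heq

lemma ne_of_not_isPeak (hp : ¬ IsPeak n s (k + 1)) (hk : k + 1 < n) : s k ≠ s (k + 2) :=
  fun heq => hp ⟨hk, Or.inr (Or.inr heq)⟩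

namespace ConsecutivePeaks

variable {p q : ℕ}

lemma le_add_four (h : AvoidsShortReps n s) (hpq : ConsecutivePeaks n s p q) : q ≤ p + 4 := by
  obtain ⟨-, hq, -, hbetween⟩ := hpq
  have hqn := hq.1
  by_contra! hgap
  have skip : ∀ i < 4, s (p + i) ≠ s (p + i + 2) := fun i hi =>
    ne_of_not_isPeak (hbetween _ (by omega) (by omega)) (by omega)
  have adj : ∀ i < 5, s (p + i) ≠ s (p + i + 1) := fun i hi => h.ne_succ (by omega)
  have e3 : s (p + 3) = s p :=
    fin_three_eq_of_ne (adj 0 (by norm_num)) (skip 0 (by norm_num)) (adj 1 (by norm_num))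
      (skip 1 (by norm_num)) (adj 2 (by norm_num))
  have e4 : s (p + 4) = s (p + 1) :=
    fin_three_eq_of_ne (adj 1 (by norm_num)) (skip 1 (by norm_num)) (adj 2 (by norm_num))
      (skip 2 (by norm_num)) (adj 3 (by norm_num))
  have e5 : s (p + 5) = s (p + 2) :=
    fin_three_eq_of_ne (adj 2 (by norm_num)) (skip 2 (by norm_num)) (adj 3 (by norm_num))
      (skip 3 (by norm_num)) (adj 4 (by norm_num))
  exact h.not_square_three (by omega) e3.symm e4.symm e5.symm

lemma add_one_lt (h : AvoidsShortReps n s) (hpq : ConsecutivePeaks n s p q) (hp0 : p ≠ 0)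
    (hqn : q ≠ n - 1) : p + 1 < q := by
  obtain ⟨hp, hq, hlt, -⟩ := hpq
  by_contra! hgap
  obtain ⟨k, rfl⟩ := Nat.exists_eq_add_one_of_ne_zero hp0
  obtain rfl : q = k + 2 := by omega
  have hqlt := hq.1
  exact h.not_square_two (k := k) (by omega) (hp.eq_of_ne (by omega)) (hq.eq_of_ne hqn)

end ConsecutivePeaks

end

/-- In a sequence over 3 letters avoiding repetitions of length at most 6, every gap
between consecutive peaks is at most 3, and at least 1 except possibly the first and
the last gap. -/
theorem stmt_8 (n : ℕ) (s : ℕ → Fin 3) (h : AvoidsShortReps n s)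
    (p q : ℕ) (hpq : ConsecutivePeaks n s p q) :
    q - p - 1 ≤ 3 ∧ (p ≠ 0 → q ≠ n - 1 → 1 ≤ q - p - 1) := by
  have hle := hpq.le_add_four h
  refine ⟨by omega, fun hp0 hqn => ?_⟩
  have hlt := hpq.add_one_lt h hp0 hqn
  omega
end

section
/- Let S be a finite sequence over a 3-letter alphabet that avoids repetitions of length at most 6, and let p be a peak of S that has a preceding peak at gap g_1 and a succeeding peak at gap g_2 with g_1 ≤ g_2 (or symmetrically with the roles of the two sides exchanged, taking g_1 to be the smaller gap). Then p is the center of a palindrome of length 2g_1 + 3, i.e., x_{p-i} = x_{p+i} for all 1 ≤ i ≤ g_1 + 1. -/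
def ThreewiseDistinct (m : ℕ) (u : ℕ → Fin 3) : Prop :=
  ∀ k, k + 2 ≤ m → u k ≠ u (k + 1) ∧ u k ≠ u (k + 2) ∧ u (k + 1) ≠ u (k + 2)

lemma ThreewiseDistinct.mono {m m' : ℕ} {u : ℕ → Fin 3} (hu : ThreewiseDistinct m' u)
    (hm : m ≤ m') : ThreewiseDistinct m u := fun k hk => hu k (hk.trans hm)

lemma Fin.three_eq_of_ne {a b c d : Fin 3} (hbc : b ≠ c) (hab : a ≠ b) (hac : a ≠ c)
    (hdb : d ≠ b) (hdc : d ≠ c) : a = d := by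
  simp only [ne_eq, Fin.ext_iff] at *
  omega

lemma ThreewiseDistinct.eq_of_eq_of_eq {m : ℕ} {u v : ℕ → Fin 3}
    (hu : ThreewiseDistinct m u) (hv : ThreewiseDistinct m v)
    (h₀ : u 0 = v 0) (h₁ : u 1 = v 1) : ∀ k ≤ m, u k = v k := by
  intro k
  induction k using Nat.twoStepInduction with
  | zero => exact fun _ => h₀
  | one => exact fun _ => h₁
  | more k ih ih₁ =>
    intro hk
    obtain ⟨hu₀₁, hu₀₂, hu₁₂⟩ := hu k hk
    obtain ⟨-, hv₀₂, hv₁₂⟩ := hv k hk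
    rw [ih (by omega), ih₁ (by omega)] at hu₀₁
    rw [ih (by omega)] at hu₀₂
    rw [ih₁ (by omega)] at hu₁₂
    exact Fin.three_eq_of_ne hu₀₁ hu₀₂.symm hu₁₂.symm hv₀₂.symm hv₁₂.symm

lemma AvoidsShortReps.ne_succ_s9 {n : ℕ} {s : ℕ → Fin 3} (h : AvoidsShortReps n s) {r : ℕ}
    (hr : r + 2 ≤ n) : s r ≠ s (r + 1) := fun he =>
  h r 1 le_rfl (by norm_num) hr fun i hi => by
    obtain rfl : i = 0 := by omega
    exact he

lemma AvoidsShortReps.distinct_around_of_not_isPeak {n : ℕ} {s : ℕ → Fin 3}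
    (h : AvoidsShortReps n s) {r : ℕ} (hr : r + 2 < n) (hnp : ¬ IsPeak n s (r + 1)) :
    s r ≠ s (r + 1) ∧ s r ≠ s (r + 2) ∧ s (r + 1) ≠ s (r + 2) :=
  ⟨h.ne_succ_s9 (by omega), fun he => hnp ⟨by omega, .inr (.inr he)⟩, h.ne_succ_s9 hr⟩

lemma ConsecutivePeaks.threewiseDistinct_left {n : ℕ} {s : ℕ → Fin 3}
    (h : AvoidsShortReps n s) {p₀ p : ℕ} (hp : ConsecutivePeaks n s p₀ p) :
    ThreewiseDistinct (p - p₀) (fun k => s (p - k)) := by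
  intro k hk
  have hnp := hp.2.2.2 (p - (k + 2) + 1) (by omega) (by omega)
  obtain ⟨h₀₁, h₀₂, h₁₂⟩ := h.distinct_around_of_not_isPeak (by have := hp.2.1.1; omega) hnp
  rw [show p - (k + 2) + 1 = p - (k + 1) by omega] at h₀₁ h₁₂
  rw [show p - (k + 2) + 2 = p - k by omega] at h₀₂ h₁₂
  exact ⟨h₁₂.symm, h₀₂.symm, h₀₁.symm⟩

lemma ConsecutivePeaks.threewiseDistinct_right {n : ℕ} {s : ℕ → Fin 3}
    (h : AvoidsShortReps n s) {p p₁ : ℕ} (hp : ConsecutivePeaks n s p p₁) :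
    ThreewiseDistinct (p₁ - p) (fun k => s (p + k)) := fun k hk =>
  h.distinct_around_of_not_isPeak (by have := hp.2.1.1; omega)
    (hp.2.2.2 (p + k + 1) (by omega) (by omega))

/-- If `p` is a peak with preceding peak `p₀` and succeeding peak `p₁`, and `g` is the
smaller of the two gaps, then `p` is the center of a palindrome of length `2g + 3`,
i.e. `s (p - i) = s (p + i)` for all `1 ≤ i ≤ g + 1`. -/
theorem stmt_9 (n : ℕ) (s : ℕ → Fin 3) (h : AvoidsShortReps n s)
    (p₀ p p₁ : ℕ) (h₀ : ConsecutivePeaks n s p₀ p) (h₁ : ConsecutivePeaks n s p p₁) :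
    ∀ i, 1 ≤ i → i ≤ min (p - p₀ - 1) (p₁ - p - 1) + 1 → s (p - i) = s (p + i) := by
  have hp₀ := h₀.2.2.1
  have hp₁ := h₁.2.2.1
  have hn := h₁.2.1.1
  have hmirror : s (p - 1) = s (p + 1) := by
    obtain ⟨-, hp | hp | hp⟩ := h₀.2.1 <;> first | exact hp | omega
  have hagree := ThreewiseDistinct.eq_of_eq_of_eq (m := min (p - p₀ - 1) (p₁ - p - 1) + 1)
    ((h₀.threewiseDistinct_left h).mono (by omega))
    ((h₁.threewiseDistinct_right h).mono (by omega)) rfl hmirror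
  exact fun i _ hi => hagree i hi
end

section
/- Let k ≥ 1 and suppose P_6[K_k] (the lexicographic product of the path on 6 vertices with the complete graph on k vertices) is nonrepetitively colored using at most 3k + ⌊k/2⌋ − 1 colors, and let A, B, C, D, E, F be the color sets of the six layers in path order (each is a k-element set since each layer is a clique). If A, B, C are pairwise disjoint and D, E, F are pairwise disjoint, then either (D is B-rich, E is A-rich, and F is C-rich) or (D is A-rich, E is C-rich, and F is B-rich). -/
/-- For `k`-element sets of colors `X` and `Y`, `Y` is `X`-rich if
`|X ∩ Y| ≥ ⌈k/2 + 1⌉ = (k+1)/2 + 1`. -/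
def IsRich {α : Type*} [DecidableEq α] (k : ℕ) (X Y : Finset α) : Prop :=
  (k + 1) / 2 + 1 ≤ (X ∩ Y).card

/-- The set of colors used by `c` on the layer of the `i`-th vertex. -/
def layerFinset {m k : ℕ} {α : Type*} [DecidableEq α]
    (c : Fin m × Fin k → α) (i : Fin m) : Finset α :=
  Finset.image (fun j : Fin k => c (i, j)) Finset.univ

/-!
Write `aD = #(A ∩ D)`, `bE = #(B ∩ E)`, and so on: a 3 × 3 array with rows `A, B, C` and columns
`D, E, F`. As `A ∪ B ∪ C` and `D ∪ E ∪ F` each have `3k` colors out of at most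
`3k + ⌊k/2⌋ - 1`, the nine entries sum to at least `2k + ⌈k/2⌉ + 1`, while every row and column
sums to at most `k`; so an entry is at least `⌈k/2⌉ + 1` as soon as all other positive entries
lie on two lines. Nonrepetitiveness makes `cD = 0` (the layers are adjacent) and forbids five
patterns of positive entries, each by an explicit repetitive path through the layers. When
`cE = 0` these force `bE = 0`, which leaves `bD`, `aE`, `cF` with this property; when `cE > 0`
they force `bD = bE = aE = 0`, which leaves `aD`, `cE`, `bF` with it.
-/

open Finset

section Nonrepetitive

variable {V α : Type*}

@[simp]
theorem lexProd_adj {W : Type*} {G : SimpleGraph V} {H : SimpleGraph W} {x y : V × W} :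
    (lexProd G H).Adj x y ↔ G.Adj x.1 y.1 ∨ (x.1 = y.1 ∧ H.Adj x.2 y.2) :=
  Iff.rfl

theorem IsNonrepetitive.map_ne_map {G : SimpleGraph V} {c : V → α} (hc : IsNonrepetitive G c)
    {u w : List V} (hu : u ≠ []) (hnd : (u ++ w).Nodup) (hch : (u ++ w).IsChain G.Adj) :
    u.map c ≠ w.map c := by
  intro hcw
  have hlen : w.length = u.length := by simpa using (congrArg List.length hcw).symm
  set l := u ++ w
  have hl : l.length = 2 * u.length := by simp [l, hlen]; ring
  obtain ⟨v, -⟩ := List.exists_mem_of_ne_nil u hu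
  refine hc u.length (List.length_pos_iff.2 hu) (fun i => l.getD i v) ?_ ?_ ?_
  · intro i j hi hj hij
    rw [← hl] at hi hj
    rw [List.getD_eq_getElem _ _ hi, List.getD_eq_getElem _ _ hj] at hij
    exact hnd.getElem_inj_iff.1 hij
  · intro i hi
    rw [← hl] at hi
    rw [List.getD_eq_getElem _ _ hi, List.getD_eq_getElem _ _ (Nat.lt_of_succ_lt hi)]
    exact List.isChain_iff_getElem.1 hch i hi
  · intro i hi
    rw [List.getD_eq_getElem _ _ (by omega), List.getD_eq_getElem _ _ (by omega)]
    simp only [l, List.getElem_append_left hi, List.getElem_append_right (Nat.le_add_left _ _)]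
    simpa [hi, hlen] using congrArg (·[i]?) hcw

theorem IsNonrepetitive.ne_of_adj_s15 {G : SimpleGraph V} {c : V → α} (hc : IsNonrepetitive G c)
    {x y : V} (h : G.Adj x y) : c x ≠ c y := by
  simpa using hc.map_ne_map (u := [x]) (w := [y]) (List.cons_ne_nil _ _) (by simpa using h.ne)
    (by simpa using h)

end Nonrepetitive

section Layers

variable {m k : ℕ} {α : Type*} [DecidableEq α] {c : Fin m × Fin k → α}

@[simp]
theorem mem_layerFinset {i : Fin m} {x : α} : x ∈ layerFinset c i ↔ ∃ j, c (i, j) = x := by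
  simp [layerFinset]

theorem card_layerFinset {G : SimpleGraph (Fin m)} (hc : IsNonrepetitive (lexProd G ⊤) c)
    (i : Fin m) : #(layerFinset c i) = k := by
  rw [layerFinset, card_image_of_injective, card_univ, Fintype.card_fin]
  intro j j' h
  by_contra hne
  exact hc.ne_of_adj_s15 (x := (i, j)) (y := (i, j')) (Or.inr ⟨rfl, hne⟩) h

theorem disjoint_layerFinset_of_adj {G : SimpleGraph (Fin m)}
    (hc : IsNonrepetitive (lexProd G ⊤) c) {i i' : Fin m} (h : G.Adj i i') :
    Disjoint (layerFinset c i) (layerFinset c i') := by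
  simp only [disjoint_left, mem_layerFinset]
  rintro _ ⟨j, rfl⟩ ⟨j', hj'⟩
  exact hc.ne_of_adj_s15 (x := (i', j')) (y := (i, j)) (Or.inl h.symm) hj'

theorem exists_eq_of_inter_layerFinset_nonempty {i i' : Fin m}
    (h : (layerFinset c i ∩ layerFinset c i').Nonempty) : ∃ j j', c (i, j) = c (i', j') := by
  obtain ⟨x, hx⟩ := h
  simp only [mem_inter, mem_layerFinset] at hx
  obtain ⟨⟨j, rfl⟩, j', hj'⟩ := hx
  exact ⟨j, j', hj'.symm⟩

theorem ne_of_disjoint_layerFinset {i i' : Fin m}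
    (h : Disjoint (layerFinset c i) (layerFinset c i')) (j j' : Fin k) :
    c (i, j) ≠ c (i', j') := fun he =>
  disjoint_left.1 h (mem_layerFinset.2 ⟨j, rfl⟩) (mem_layerFinset.2 ⟨j', he.symm⟩)

end Layers

/-! The digits in the names below are the layers visited by the repetitive path, split into
its two halves. -/

section PathSix

variable {k : ℕ} {α : Type*} [DecidableEq α] {c : Fin 6 × Fin k → α}

local notation "L" => layerFinset c

theorem not_square_12_34 (hc : IsNonrepetitive (lexProd (SimpleGraph.pathGraph 6) ⊤) c) :
    ¬((L 1 ∩ L 3).Nonempty ∧ (L 2 ∩ L 4).Nonempty) := by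
  rintro ⟨h13, h24⟩
  obtain ⟨b, b₃, hb⟩ := exists_eq_of_inter_layerFinset_nonempty h13
  obtain ⟨q, q₄, hq⟩ := exists_eq_of_inter_layerFinset_nonempty h24
  exact hc.map_ne_map (u := [(1, b), (2, q)]) (w := [(3, b₃), (4, q₄)]) (by simp)
    (by simp) (by simp [SimpleGraph.pathGraph_adj]) (by simp [hb, hq])

theorem not_square_012_345 (hc : IsNonrepetitive (lexProd (SimpleGraph.pathGraph 6) ⊤) c) :
    ¬((L 0 ∩ L 3).Nonempty ∧ (L 1 ∩ L 4).Nonempty ∧ (L 2 ∩ L 5).Nonempty) := by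
  rintro ⟨h03, h14, h25⟩
  obtain ⟨a, a₃, ha⟩ := exists_eq_of_inter_layerFinset_nonempty h03
  obtain ⟨b, b₄, hb⟩ := exists_eq_of_inter_layerFinset_nonempty h14
  obtain ⟨q, q₅, hq⟩ := exists_eq_of_inter_layerFinset_nonempty h25
  exact hc.map_ne_map (u := [(0, a), (1, b), (2, q)]) (w := [(3, a₃), (4, b₄), (5, q₅)])
    (by simp) (by simp) (by simp [SimpleGraph.pathGraph_adj]) (by simp [ha, hb, hq])

theorem not_square_112_345 (hc : IsNonrepetitive (lexProd (SimpleGraph.pathGraph 6) ⊤) c)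
    (h34 : Disjoint (L 3) (L 4)) :
    ¬((L 1 ∩ L 3).Nonempty ∧ (L 1 ∩ L 4).Nonempty ∧ (L 2 ∩ L 5).Nonempty) := by
  rintro ⟨h13, h14, h25⟩
  obtain ⟨b, b₃, hb⟩ := exists_eq_of_inter_layerFinset_nonempty h13
  obtain ⟨b', b₄, hb'⟩ := exists_eq_of_inter_layerFinset_nonempty h14
  obtain ⟨q, q₅, hq⟩ := exists_eq_of_inter_layerFinset_nonempty h25
  have hbb' : b ≠ b' := by
    rintro rfl
    exact ne_of_disjoint_layerFinset h34 b₃ b₄ (hb.symm.trans hb')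
  exact hc.map_ne_map (u := [(1, b), (1, b'), (2, q)]) (w := [(3, b₃), (4, b₄), (5, q₅)])
    (by simp) (by simp [hbb']) (by simp [SimpleGraph.pathGraph_adj, hbb'])
    (by simp [hb, hb', hq])

theorem not_square_012_344 (hc : IsNonrepetitive (lexProd (SimpleGraph.pathGraph 6) ⊤) c)
    (h12 : Disjoint (L 1) (L 2)) :
    ¬((L 0 ∩ L 3).Nonempty ∧ (L 1 ∩ L 4).Nonempty ∧ (L 2 ∩ L 4).Nonempty) := by
  rintro ⟨h03, h14, h24⟩
  obtain ⟨a, a₃, ha⟩ := exists_eq_of_inter_layerFinset_nonempty h03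
  obtain ⟨b, b₄, hb⟩ := exists_eq_of_inter_layerFinset_nonempty h14
  obtain ⟨q, q₄, hq⟩ := exists_eq_of_inter_layerFinset_nonempty h24
  have hbq : b₄ ≠ q₄ := by
    rintro rfl
    exact ne_of_disjoint_layerFinset h12 b q (hb.trans hq.symm)
  exact hc.map_ne_map (u := [(0, a), (1, b), (2, q)]) (w := [(3, a₃), (4, b₄), (4, q₄)])
    (by simp) (by simp [hbq]) (by simp [SimpleGraph.pathGraph_adj, hbq])
    (by simp [ha, hb, hq])

theorem not_square_0012_3454 (hc : IsNonrepetitive (lexProd (SimpleGraph.pathGraph 6) ⊤) c)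
    (h02 : Disjoint (L 0) (L 2)) (h34 : Disjoint (L 3) (L 4)) :
    ¬((L 0 ∩ L 3).Nonempty ∧ (L 0 ∩ L 4).Nonempty ∧ (L 1 ∩ L 5).Nonempty ∧
      (L 2 ∩ L 4).Nonempty) := by
  rintro ⟨h03, h04, h15, h24⟩
  obtain ⟨a, a₃, ha⟩ := exists_eq_of_inter_layerFinset_nonempty h03
  obtain ⟨a', a₄, ha'⟩ := exists_eq_of_inter_layerFinset_nonempty h04
  obtain ⟨b, b₅, hb⟩ := exists_eq_of_inter_layerFinset_nonempty h15
  obtain ⟨q, q₄, hq⟩ := exists_eq_of_inter_layerFinset_nonempty h24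
  have haa' : a ≠ a' := by
    rintro rfl
    exact ne_of_disjoint_layerFinset h34 a₃ a₄ (ha.symm.trans ha')
  have haq : a₄ ≠ q₄ := by
    rintro rfl
    exact ne_of_disjoint_layerFinset h02 a' q (ha'.trans hq.symm)
  exact hc.map_ne_map (u := [(0, a), (0, a'), (1, b), (2, q)])
    (w := [(3, a₃), (4, a₄), (5, b₅), (4, q₄)]) (by simp) (by simp [haa', haq])
    (by simp [SimpleGraph.pathGraph_adj, haa']) (by simp [ha, ha', hb, hq])

end PathSix

section Counting

variable {α : Type*} [DecidableEq α] {X Y Z W : Finset α}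

theorem card_union₃ (hYZ : Disjoint Y Z) (hYW : Disjoint Y W) (hZW : Disjoint Z W) :
    #(Y ∪ Z ∪ W) = #Y + #Z + #W := by
  rw [card_union_of_disjoint (disjoint_union_left.2 ⟨hYW, hZW⟩), card_union_of_disjoint hYZ]

theorem card_inter_union₃ (hYZ : Disjoint Y Z) (hYW : Disjoint Y W) (hZW : Disjoint Z W) :
    #(X ∩ (Y ∪ Z ∪ W)) = #(X ∩ Y) + #(X ∩ Z) + #(X ∩ W) := by
  rw [inter_union_distrib_left, inter_union_distrib_left]
  exact card_union₃ (hYZ.mono inter_subset_right inter_subset_right)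
    (hYW.mono inter_subset_right inter_subset_right) (hZW.mono inter_subset_right inter_subset_right)

theorem card_union₃_inter (hYZ : Disjoint Y Z) (hYW : Disjoint Y W) (hZW : Disjoint Z W) :
    #((Y ∪ Z ∪ W) ∩ X) = #(Y ∩ X) + #(Z ∩ X) + #(W ∩ X) := by
  simp only [inter_comm _ X]
  exact card_inter_union₃ hYZ hYW hZW

theorem card_inter_add_card_inter_add_card_inter_le (hYZ : Disjoint Y Z) (hYW : Disjoint Y W)
    (hZW : Disjoint Z W) : #(X ∩ Y) + #(X ∩ Z) + #(X ∩ W) ≤ #X :=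
  card_inter_union₃ hYZ hYW hZW ▸ card_le_card inter_subset_left

theorem card_inter_add_card_inter_add_card_inter_le' (hYZ : Disjoint Y Z) (hYW : Disjoint Y W)
    (hZW : Disjoint Z W) : #(Y ∩ X) + #(Z ∩ X) + #(W ∩ X) ≤ #X :=
  card_union₃_inter hYZ hYW hZW ▸ card_le_card inter_subset_right

theorem card_union₃_add_card_union₃_le [Fintype α] {A B C D E F : Finset α}
    (hAB : Disjoint A B) (hAC : Disjoint A C) (hBC : Disjoint B C)
    (hDE : Disjoint D E) (hDF : Disjoint D F) (hEF : Disjoint E F) :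
    #A + #B + #C + (#D + #E + #F) ≤ Fintype.card α +
      ((#(A ∩ D) + #(B ∩ D) + #(C ∩ D)) + (#(A ∩ E) + #(B ∩ E) + #(C ∩ E)) +
        (#(A ∩ F) + #(B ∩ F) + #(C ∩ F))) := by
  rw [← card_union₃ hAB hAC hBC, ← card_union₃ hDE hDF hEF, ← card_union_add_card_inter,
    card_inter_union₃ hDE hDF hEF, card_union₃_inter hAB hAC hBC,
    card_union₃_inter hAB hAC hBC, card_union₃_inter hAB hAC hBC]
  exact Nat.add_le_add_right (card_le_univ _) _

end Counting

theorem rich_of_line_sums {k n aD bD aE bE cE aF bF cF : ℕ}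
    (htotal : 2 * k + n + 1 ≤ aD + bD + aE + bE + cE + aF + bF + cF)
    (rowA : aD + aE + aF ≤ k) (rowB : bD + bE + bF ≤ k) (rowC : cE + cF ≤ k)
    (colD : aD + bD ≤ k) (colE : aE + bE + cE ≤ k) (colF : aF + bF + cF ≤ k)
    (h₁ : ¬(0 < bD ∧ 0 < cE)) (h₂ : ¬(0 < aD ∧ 0 < bE ∧ 0 < cF))
    (h₃ : ¬(0 < bD ∧ 0 < bE ∧ 0 < cF)) (h₄ : ¬(0 < aD ∧ 0 < bE ∧ 0 < cE))
    (h₅ : ¬(0 < aD ∧ 0 < aE ∧ 0 < bF ∧ 0 < cE)) :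
    (n + 1 ≤ bD ∧ n + 1 ≤ aE ∧ n + 1 ≤ cF) ∨ (n + 1 ≤ aD ∧ n + 1 ≤ cE ∧ n + 1 ≤ bF) := by
  rcases Nat.eq_zero_or_pos cE with hcE | hcE
  · have hbE : bE = 0 := by omega
    left
    omega
  · have hbD : bD = 0 := by omega
    have hbE : bE = 0 := by omega
    have haE : aE = 0 := by omega
    right
    omega

/-- Suppose `P₆[K_k]` is nonrepetitively colored with at most `3k + ⌊k/2⌋ - 1` colors
and `A,…,F` are the color sets of the six layers in path order. If `A, B, C` are
pairwise disjoint and `D, E, F` are pairwise disjoint, then `D, E, F` are either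
`B, A, C`-rich respectively, or `A, C, B`-rich respectively. -/
theorem stmt_15 (k : ℕ) (hk : 1 ≤ k)
    (c : Fin 6 × Fin k → Fin (3 * k + k / 2 - 1))
    (hnr : IsNonrepetitive (lexProd (SimpleGraph.pathGraph 6) (⊤ : SimpleGraph (Fin k))) c)
    (A B C D E F : Finset (Fin (3 * k + k / 2 - 1)))
    (hA : A = layerFinset c 0) (hB : B = layerFinset c 1) (hC : C = layerFinset c 2)
    (hD : D = layerFinset c 3) (hE : E = layerFinset c 4) (hF : F = layerFinset c 5)
    (hAB : Disjoint A B) (hAC : Disjoint A C) (hBC : Disjoint B C)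
    (hDE : Disjoint D E) (hDF : Disjoint D F) (hEF : Disjoint E F) :
    (IsRich k B D ∧ IsRich k A E ∧ IsRich k C F) ∨
    (IsRich k A D ∧ IsRich k C E ∧ IsRich k B F) := by
  subst hA hB hC hD hE hF
  have hcard := card_layerFinset hnr
  have hCD : #(layerFinset c 2 ∩ layerFinset c 3) = 0 := by
    rw [card_eq_zero, ← disjoint_iff_inter_eq_empty]
    exact disjoint_layerFinset_of_adj hnr (by simp [SimpleGraph.pathGraph_adj])
  have htotal := card_union₃_add_card_union₃_le hAB hAC hBC hDE hDF hEF
  have rowA := card_inter_add_card_inter_add_card_inter_le (X := layerFinset c 0) hDE hDF hEF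
  have rowB := card_inter_add_card_inter_add_card_inter_le (X := layerFinset c 1) hDE hDF hEF
  have rowC := card_inter_add_card_inter_add_card_inter_le (X := layerFinset c 2) hDE hDF hEF
  have colD := card_inter_add_card_inter_add_card_inter_le' (X := layerFinset c 3) hAB hAC hBC
  have colE := card_inter_add_card_inter_add_card_inter_le' (X := layerFinset c 4) hAB hAC hBC
  have colF := card_inter_add_card_inter_add_card_inter_le' (X := layerFinset c 5) hAB hAC hBC
  simp only [hcard, Fintype.card_fin] at htotal rowA rowB rowC colD colE colF
  unfold IsRich
  refine rich_of_line_sums (by omega) rowA rowB (by omega) (by omega) colE colF ?_ ?_ ?_ ?_ ?_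
  all_goals simp only [card_pos]
  exacts [not_square_12_34 hnr, not_square_012_345 hnr, not_square_112_345 hnr hDE,
    not_square_012_344 hnr hBC, not_square_0012_3454 hnr hAC hDE]
end

section
/- The fractional Thue chromatic number of the cycle on 7 vertices equals 7/2; that is, there exists a 2-tuple nonrepetitive 7-coloring of C_7, and every p-tuple nonrepetitive q-coloring of C_7 satisfies q/p ≥ 7/2 (equivalently 2q ≥ 7p). -/
/-- For positive integers `p ≤ q`, a `p`-tuple nonrepetitive `q`-coloring of a graph
`G` is a map assigning to each vertex a `p`-element subset of the `q` colors such that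
for every path `v₁ v₂ … v_{2l}` (pairwise distinct vertices, consecutive ones adjacent)
and every choice of colors `cᵢ ∈ c(vᵢ)`, the sequence `c₁, …, c_{2l}` is not a
repetition. Here the tuple-size condition is stated separately. -/
def IsTupleNonrepetitive {V : Type*} (G : SimpleGraph V) (q : ℕ)
    (c : V → Finset (Fin q)) : Prop :=
  ∀ l : ℕ, 0 < l → ∀ f : ℕ → V,
    (∀ i j, i < 2 * l → j < 2 * l → f i = f j → i = j) →
    (∀ i, i + 1 < 2 * l → G.Adj (f i) (f (i + 1))) →
    ∀ g : ℕ → Fin q, (∀ i, i < 2 * l → g i ∈ c (f i)) →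
      ¬ (∀ i, i < l → g i = g (i + l))

/-!
Paths in a cycle are arcs, so a tuple colouring of a cycle is nonrepetitive iff no arc
`x, x + d, …, x + (2l - 1) d` with `d = ±1` carries a square, that is, iff for every such arc one
of the `l` pairs of vertices at distance `l` on it has disjoint colour sets. For the upper bound
this is a finite check on an explicit colouring of `C₇`.

For the lower bound we double count: if every colour class `S` satisfies `∑ v ∈ S, w v ≤ M`,
then `p * ∑ v, w v ≤ M * q`. If no colour occupies a triple `{x, x + 2, x + 4}`, every colour
class is an independent set of size at most 2 (take `w = 1`, `M = 2`). Otherwise, after a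
rotation some colour occupies `{0, 2, 4}`, and the squares on arcs of length 4 and 6 exclude
enough further pairs that, up to the reflection `v ↦ 4 - v`, the weights `0, 3, 3, 6, 3, 3, 3`
(total 21) give every colour class weight at most 6.
-/

open Finset SimpleGraph Function Fin.CommRing

theorem IsTupleNonrepetitive.comp {V W : Type*} {G : SimpleGraph V} {G' : SimpleGraph W} {q : ℕ}
    {c : V → Finset (Fin q)} (h : IsTupleNonrepetitive G q c) (φ : G' →g G)
    (hφ : Injective φ) : IsTupleNonrepetitive G' q (c ∘ φ) :=
  fun l hl f hinj hadj g hg =>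
    h l hl (φ ∘ f) (fun i j hi hj hij => hinj i j hi hj (hφ hij))
      (fun i hi => φ.map_adj (hadj i hi)) g hg

theorem sum_mul_le_of_forall_sum_le {V α : Type*} [Fintype V] [Fintype α] [DecidableEq α]
    {c : V → Finset α} {p : ℕ} (hc : ∀ v, #(c v) = p) (w : V → ℕ) {M : ℕ}
    (hw : ∀ a, ∑ v with a ∈ c v, w v ≤ M) : (∑ v, w v) * p ≤ M * Fintype.card α :=
  calc (∑ v, w v) * p = ∑ v, ∑ _a ∈ c v, w v := by rw [sum_mul]; simp [hc, mul_comm]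
    _ = ∑ a, ∑ v with a ∈ c v, w v := sum_comm' (by simp)
    _ ≤ ∑ _a : α, M := sum_le_sum fun a _ => hw a
    _ = M * Fintype.card α := by simp [mul_comm]

section CycleGraph

variable {n : ℕ}

theorem cycleGraph_adj_iff_sub_eq {u v : Fin (n + 2)} :
    (cycleGraph (n + 2)).Adj u v ↔ v - u = 1 ∨ v - u = -1 := by
  rw [cycleGraph_adj, or_comm, ← neg_sub v u, neg_eq_iff_eq_neg]

@[simps]
def cycleGraphAffineHom (x d : Fin (n + 2)) (hd : d = 1 ∨ d = -1) :
    cycleGraph (n + 2) →g cycleGraph (n + 2) where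
  toFun v := x + d * v
  map_rel' {u v} huv := by
    rw [cycleGraph_adj_iff_sub_eq] at huv ⊢
    rw [show x + d * v - (x + d * u) = d * (v - u) by ring]
    rcases hd with rfl | rfl <;> rcases huv with h | h <;> simp [h]

theorem cycleGraphAffineHom_injective (x d : Fin (n + 2)) (hd : d = 1 ∨ d = -1) :
    Injective (cycleGraphAffineHom x d hd) := by
  intro u v huv
  have hdd : d * d = 1 := by rcases hd with rfl | rfl <;> simp
  have := congrArg (d * ·) (add_left_cancel (a := x) huv)
  simpa [← mul_assoc, hdd] using this

theorem sub_eq_sub_of_cycleGraph_adj_of_adj {u v w : Fin (n + 2)}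
    (huv : (cycleGraph (n + 2)).Adj u v) (hvw : (cycleGraph (n + 2)).Adj v w) (huw : u ≠ w) :
    w - v = v - u := by
  rw [cycleGraph_adj_iff_sub_eq] at huv hvw
  rcases huv with h₁ | h₁ <;> rcases hvw with h₂ | h₂
  · rw [h₁, h₂]
  · exact absurd (by linear_combination -(h₁ + h₂)) huw
  · exact absurd (by linear_combination -(h₁ + h₂)) huw
  · rw [h₁, h₂]

theorem eq_add_mul_of_cycleGraph_path {f : ℕ → Fin (n + 2)} {m : ℕ} (hm : 2 ≤ m)
    (hinj : ∀ i j, i < m → j < m → f i = f j → i = j)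
    (hadj : ∀ i, i + 1 < m → (cycleGraph (n + 2)).Adj (f i) (f (i + 1))) :
    ∃ d : Fin (n + 2), (d = 1 ∨ d = -1) ∧ ∀ i < m, f i = f 0 + d * i := by
  have hstep : ∀ i, i + 1 < m → f (i + 1) - f i = f 1 - f 0 := by
    intro i hi
    induction i with
    | zero => rfl
    | succ i ih =>
      have hne : f i ≠ f (i + 2) := fun h => by
        have := hinj _ _ (by omega) (by omega) h
        omega
      rw [sub_eq_sub_of_cycleGraph_adj_of_adj (hadj i (by omega)) (hadj (i + 1) hi) hne,
        ih (by omega)]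
  refine ⟨f 1 - f 0, cycleGraph_adj_iff_sub_eq.1 (hadj 0 (by omega)), fun i hi => ?_⟩
  induction i with
  | zero => simp
  | succ i ih =>
    rw [← sub_add_cancel (f (i + 1)) (f i), hstep i hi, ih (by omega)]
    push_cast
    ring

theorem IsTupleNonrepetitive.exists_disjoint_natCast {q l : ℕ} {c : Fin (n + 2) → Finset (Fin q)}
    (h : IsTupleNonrepetitive (cycleGraph (n + 2)) q c) (hl : 0 < l) (hln : 2 * l ≤ n + 2) :
    ∃ i < l, Disjoint (c i) (c ↑(i + l)) := by
  by_contra! hcommon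
  simp only [not_disjoint_iff] at hcommon
  have : Nonempty (Fin q) := ⟨(hcommon 0 hl).choose⟩
  choose! b hb using hcommon
  refine h l hl (fun i => i) (fun i j hi hj hij => ?_) (fun i _ => ?_) (fun i => b (i % l))
    (fun i hi => ?_) (fun i _ => by simp)
  · simpa [Fin.val_cast_of_lt (show i < n + 2 by omega),
      Fin.val_cast_of_lt (show j < n + 2 by omega)] using congrArg Fin.val hij
  · exact cycleGraph_adj_iff_sub_eq.2 (Or.inl (by push_cast; ring))
  · rcases lt_or_ge i l with hil | hil
    · rw [Nat.mod_eq_of_lt hil]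
      exact (hb i hil).1
    · rw [Nat.mod_eq_sub_mod hil, Nat.mod_eq_of_lt (by omega)]
      simpa [Nat.sub_add_cancel hil] using (hb (i - l) (by omega)).2

theorem isTupleNonrepetitive_cycleGraph_iff {q : ℕ} {c : Fin (n + 2) → Finset (Fin q)} :
    IsTupleNonrepetitive (cycleGraph (n + 2)) q c ↔
      ∀ l, 0 < l → 2 * l ≤ n + 2 → ∀ x d : Fin (n + 2), (d = 1 ∨ d = -1) →
        ∃ i < l, Disjoint (c (x + d * i)) (c (x + d * ↑(i + l))) := by
  refine ⟨fun h l hl hln x d hd => ?_, fun H l hl f hinj hadj g hg hrep => ?_⟩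
  · exact (h.comp _ (cycleGraphAffineHom_injective x d hd)).exists_disjoint_natCast hl hln
  · obtain ⟨d, hd, hf⟩ := eq_add_mul_of_cycleGraph_path (by omega) hinj hadj
    have hln : 2 * l ≤ n + 2 := by
      simpa using card_le_card_of_injOn f (s := range (2 * l)) (t := univ) (by simp)
        fun i hi j hj hij => hinj i j (by simpa using hi) (by simpa using hj) hij
    obtain ⟨i, hi, hdisj⟩ := H l hl hln (f 0) d hd
    have hi₁ := hg i (by omega)
    have hi₂ := hg (i + l) (by omega)
    rw [hf i (by omega)] at hi₁
    rw [hf (i + l) (by omega), ← hrep i hi] at hi₂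
    exact disjoint_left.1 hdisj hi₁ hi₂

end CycleGraph

section ShortArcs

variable {n q : ℕ} {c : Fin (n + 2) → Finset (Fin q)} {x : Fin (n + 2)} {a b e : Fin q}

theorem IsTupleNonrepetitive.exists_disjoint_add (h : IsTupleNonrepetitive (cycleGraph (n + 2)) q c)
    {l : ℕ} (hl : 0 < l) (hln : 2 * l ≤ n + 2) (x : Fin (n + 2)) :
    ∃ i < l, Disjoint (c (x + i)) (c (x + i + l)) := by
  simpa [add_assoc] using isTupleNonrepetitive_cycleGraph_iff.1 h l hl hln x 1 (Or.inl rfl)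

theorem IsTupleNonrepetitive.notMem_add_one (h : IsTupleNonrepetitive (cycleGraph (n + 2)) q c)
    (ha : a ∈ c x) : a ∉ c (x + 1) := by
  obtain ⟨i, hi, hdisj⟩ := h.exists_disjoint_add one_pos (by omega) x
  obtain rfl : i = 0 := by omega
  simpa using disjoint_left.1 hdisj (by simpa using ha)

theorem IsTupleNonrepetitive.notMem_add_three (h : IsTupleNonrepetitive (cycleGraph (n + 2)) q c)
    (hn : 4 ≤ n + 2) (ha₀ : a ∈ c x) (ha₂ : a ∈ c (x + 2)) (hb₁ : b ∈ c (x + 1)) :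
    b ∉ c (x + 3) := by
  obtain ⟨i, hi, hdisj⟩ := h.exists_disjoint_add two_pos hn x
  interval_cases i <;> norm_num [add_assoc] at hdisj
  · exact absurd ha₂ (disjoint_left.1 hdisj ha₀)
  · exact disjoint_left.1 hdisj hb₁

theorem IsTupleNonrepetitive.notMem_add_five (h : IsTupleNonrepetitive (cycleGraph (n + 2)) q c)
    (hn : 6 ≤ n + 2) (ha₀ : a ∈ c x) (ha₃ : a ∈ c (x + 3)) (hb₁ : b ∈ c (x + 1))
    (hb₄ : b ∈ c (x + 4)) (he₂ : e ∈ c (x + 2)) : e ∉ c (x + 5) := by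
  obtain ⟨i, hi, hdisj⟩ := h.exists_disjoint_add three_pos hn x
  interval_cases i <;> norm_num [add_assoc] at hdisj
  · exact absurd ha₃ (disjoint_left.1 hdisj ha₀)
  · exact absurd hb₄ (disjoint_left.1 hdisj hb₁)
  · exact disjoint_left.1 hdisj he₂

end ShortArcs

section CycleSeven

set_option maxRecDepth 4000 in
theorem card_le_two_of_add_one_notMem_of_add_four_notMem (S : Finset (Fin 7))
    (hadj : ∀ x ∈ S, x + 1 ∉ S) (htri : ∀ x ∈ S, x + 2 ∈ S → x + 4 ∉ S) : #S ≤ 2 := by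
  revert S
  decide

-- A dual certificate: every colour class allowed by the constraints below has weight at most 6,
-- while the total weight is 21.
def tripleWeight : Fin 7 → ℕ := ![0, 3, 3, 6, 3, 3, 3]

set_option maxRecDepth 4000 in
set_option synthInstance.maxSize 1000 in
theorem sum_tripleWeight_le_six (S : Finset (Fin 7)) (hadj : ∀ x ∈ S, x + 1 ∉ S)
    (h13 : 1 ∈ S → 3 ∉ S) (h35 : 3 ∈ S → 5 ∉ S) (h61 : 6 ∈ S → 1 ∉ S) (h36 : 3 ∈ S → 6 ∉ S)
    (h246 : 2 ∈ S → 4 ∈ S → 6 ∉ S) : ∑ v ∈ S, tripleWeight v ≤ 6 := by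
  revert S
  decide

variable {p q : ℕ} {c : Fin 7 → Finset (Fin q)} {a : Fin q}

theorem IsTupleNonrepetitive.seven_mul_le_two_mul_of_disjoint
    (h : IsTupleNonrepetitive (cycleGraph 7) q c) (hc : ∀ v, #(c v) = p)
    (ha₀ : a ∈ c 0) (ha₂ : a ∈ c 2) (ha₄ : a ∈ c 4) (h36 : Disjoint (c 3) (c 6))
    (h246 : ∀ b ∈ c 2, b ∈ c 4 → b ∉ c 6) : 7 * p ≤ 2 * q := by
  have := sum_mul_le_of_forall_sum_le hc tripleWeight (M := 6) fun b => by
    apply sum_tripleWeight_le_six <;> simp only [mem_filter, mem_univ, true_and]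
    · exact fun x hx => h.notMem_add_one hx
    · exact h.notMem_add_three (x := 0) (by omega) ha₀ ha₂
    · exact h.notMem_add_three (x := 2) (by omega) ha₂ ha₄
    · exact fun h6 h1 => h.notMem_add_three (x := 6) (by omega) h6 h1 ha₀ ha₂
    · exact fun h3 h6 => disjoint_left.1 h36 h3 h6
    · exact h246 b
  have hsum : ∑ v, tripleWeight v = 21 := by decide
  rw [hsum, Fintype.card_fin] at this
  omega

theorem IsTupleNonrepetitive.seven_mul_le_two_mul_of_mem_zero_two_four
    (h : IsTupleNonrepetitive (cycleGraph 7) q c) (hc : ∀ v, #(c v) = p)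
    (ha₀ : a ∈ c 0) (ha₂ : a ∈ c 2) (ha₄ : a ∈ c 4) : 7 * p ≤ 2 * q := by
  have hcases : (Disjoint (c 3) (c 6) ∧ ∀ b ∈ c 2, b ∈ c 4 → b ∉ c 6) ∨
      (Disjoint (c 1) (c 5) ∧ ∀ b ∈ c 2, b ∈ c 0 → b ∉ c 5) := by
    refine or_iff_not_imp_left.2 fun hA => ?_
    obtain ⟨b', hb'⟩ : ∃ b', (b' ∈ c 3 ∧ b' ∈ c 6) ∨ (b' ∈ c 2 ∧ b' ∈ c 4 ∧ b' ∈ c 6) := by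
      simp only [not_and_or, not_disjoint_iff, not_forall, not_not] at hA
      grind
    refine ⟨disjoint_left.2 fun b hb₁ hb₅ => ?_, fun b hb₂ hb₀ hb₅ => ?_⟩
    · rcases hb' with ⟨h3, h6⟩ | ⟨h2, h4, h6⟩
      · exact h.notMem_add_five (x := 3) (by omega) h3 h6 ha₄ ha₀ hb₅ hb₁
      · exact h.notMem_add_five (x := 4) (by omega) ha₄ ha₀ hb₅ hb₁ h6 h2
    · rcases hb' with ⟨h3, h6⟩ | ⟨h2, h4, h6⟩
      · exact h.notMem_add_five (x := 2) (by omega) hb₂ hb₅ h3 h6 ha₄ ha₀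
      · exact h.notMem_add_three (x := 4) (by omega) h4 h6 hb₅ hb₀
  rcases hcases with ⟨h36, h246⟩ | ⟨h15, h205⟩
  · exact h.seven_mul_le_two_mul_of_disjoint hc ha₀ ha₂ ha₄ h36 h246
  · have hreflect := h.comp _ (cycleGraphAffineHom_injective 4 (-1) (Or.inr rfl))
    exact hreflect.seven_mul_le_two_mul_of_disjoint (fun v => hc _) ha₄ ha₂ ha₀ h15 h205

theorem IsTupleNonrepetitive.seven_mul_le_two_mul
    (h : IsTupleNonrepetitive (cycleGraph 7) q c) (hc : ∀ v, #(c v) = p) : 7 * p ≤ 2 * q := by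
  by_cases htri : ∃ x a, a ∈ c x ∧ a ∈ c (x + 2) ∧ a ∈ c (x + 4)
  · obtain ⟨x, a, hx₀, hx₂, hx₄⟩ := htri
    have hrotate := h.comp _ (cycleGraphAffineHom_injective x 1 (Or.inl rfl))
    exact hrotate.seven_mul_le_two_mul_of_mem_zero_two_four (fun v => hc _) (a := a)
      (by simpa using hx₀) (by simpa using hx₂) (by simpa using hx₄)
  · simp only [not_exists, not_and] at htri
    have := sum_mul_le_of_forall_sum_le hc (fun _ => 1) (M := 2) fun b => by
      simpa using card_le_two_of_add_one_notMem_of_add_four_notMem {v | b ∈ c v}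
        (by simpa using fun x hx => h.notMem_add_one hx) (by simpa using fun x => htri x b)
    simpa using this

end CycleSeven

def cycleSevenColoring : Fin 7 → Finset (Fin 7) :=
  ![{0, 1}, {2, 3}, {0, 4}, {1, 5}, {4, 6}, {2, 3}, {5, 6}]

theorem isTupleNonrepetitive_cycleSevenColoring :
    IsTupleNonrepetitive (cycleGraph 7) 7 cycleSevenColoring := by
  have hsquares : ∀ l : ℕ, l < 4 → 0 < l → ∀ x d : Fin 7, (d = 1 ∨ d = -1) → ∃ i < l,
      Disjoint (cycleSevenColoring (x + d * i)) (cycleSevenColoring (x + d * ↑(i + l))) := by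
    decide
  exact isTupleNonrepetitive_cycleGraph_iff.2 fun l hl hl7 => hsquares l (by omega) hl

/-- The fractional Thue chromatic number of `C₇` equals `7/2`: there is a `2`-tuple
nonrepetitive `7`-coloring of `C₇`, and every `p`-tuple nonrepetitive `q`-coloring of
`C₇` satisfies `2q ≥ 7p`. -/
theorem stmt_19 :
    (∃ c : Fin 7 → Finset (Fin 7), (∀ v, (c v).card = 2) ∧
      IsTupleNonrepetitive (SimpleGraph.cycleGraph 7) 7 c) ∧
    (∀ p q : ℕ, 0 < p → p < q → ∀ c : Fin 7 → Finset (Fin q),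
      (∀ v, (c v).card = p) →
      IsTupleNonrepetitive (SimpleGraph.cycleGraph 7) q c → 7 * p ≤ 2 * q) :=
  ⟨⟨cycleSevenColoring, by decide, isTupleNonrepetitive_cycleSevenColoring⟩,
    fun _ _ _ _ _ hc h => h.seven_mul_le_two_mul hc⟩
end
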